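/- Let n ≥ 1, let Ω ⊂ ℝⁿ be a nonempty bounded open set, and let m be an odd natural number. Let σ : Ω → ℝ^{n×n} be measurable with |σ_{ij}(x)| ≤ Λ a.e. for all i,j, let f ∈ L¹(Ω), let q, q† : Ω → ℝ be measurable with 0 ≤ q ≤ q̄ a.e. and q† bounded, and let p ∈ [2,∞) with conjugate exponent p' = p/(p−1). Let u, u† : ℝⁿ → ℝ be continuously differentiable with sup_Ω |u| ≤ C_A and sup_Ω |u†| ≤ C_A and gradients bounded on Ω, with u†(x) > 0 for every x ∈ Ω, and assume the weak formulations ∫_Ω σ∇u·∇v dx + ∫_Ω q u^m v dx = ∫_Ω f v dx and ∫_Ω σ∇u†·∇v dx + ∫_Ω q† (u†)^m v dx = ∫_Ω f v dx hold for every continuously differentiable v with compact support contained in Ω. Then for every φ ∈ C_c^∞(Ω): |∫_Ω (q − q†) φ dx| ≤ (nΛ + m q̄ C_A^{m−1}) · ( ‖u−u†‖_{L^p(Ω)} + ‖∇(u−u†)‖_{L^p(Ω)} ) · ( ‖(u†)^{−m}φ‖_{L^{p'}(Ω)} + ‖∇((u†)^{−m}φ)‖_{L^{p'}(Ω)} ).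 -/

import Mathlib

/-!
Test both weak formulations with `v = φ / (u†)^m`, which is admissible because `u† > 0` on
`tsupport φ ⊆ Ω`. Since `(u†)^m v = φ` on `Ω`, subtracting them gives
`∫ (q - q†) φ = ∫ q ((u†)^m - u^m) v - ∫ σ ∇(u - u†) · ∇v`.
Pointwise `|a^m - b^m| ≤ m C^(m-1) |a - b|` for `|a|, |b| ≤ C`, and `|σ ξ · η| ≤ n Λ |ξ| |η|`
when the entries of `σ` are bounded by `Λ` (each of the two `ℓ¹` norms costs a factor `√n`), so
Hölder's inequality bounds the two terms by `m q̄ C_A^(m-1) ‖u - u†‖_p ‖v‖_p'` and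
`n Λ ‖∇(u - u†)‖_p ‖∇v‖_p'`.
-/

open MeasureTheory Metric Finset

theorem EuclideanSpace.sum_abs_le_sqrt_card_mul_norm {ι : Type*} [Fintype ι]
    (x : EuclideanSpace ℝ ι) : ∑ i, |x i| ≤ √(Fintype.card ι) * ‖x‖ := by
  rw [EuclideanSpace.norm_eq, ← Real.sqrt_mul (Nat.cast_nonneg _)]
  refine Real.le_sqrt_of_sq_le ?_
  simpa [Real.norm_eq_abs, sq_abs] using sq_sum_le_card_mul_sum_sq (s := univ) (f := fun i => |x i|)

theorem ContinuousLinearMap.sum_abs_apply_single_le {ι : Type*} [Fintype ι] [DecidableEq ι]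
    (L : EuclideanSpace ℝ ι →L[ℝ] ℝ) :
    ∑ i, |L (EuclideanSpace.single i 1)| ≤ √(Fintype.card ι) * ‖L‖ := by
  set g := (InnerProductSpace.toDual ℝ (EuclideanSpace ℝ ι)).symm L
  have hg : ∀ i, L (EuclideanSpace.single i 1) = g i := fun i => by
    rw [← InnerProductSpace.toDual_symm_apply, EuclideanSpace.inner_single_right]; simp [g]
  simpa [hg, g] using EuclideanSpace.sum_abs_le_sqrt_card_mul_norm g

section MatrixPairing

variable {ι : Type*} [Fintype ι] [DecidableEq ι]

/-- The integrand `σ ∇u · ∇v` of the weak formulation at a point, with `A = σ x`, `L = Du x`,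
`M = Dv x`, so that `∂ⱼu = L (single j 1)`. -/
noncomputable def matrixPairing (A : Matrix ι ι ℝ) (L M : EuclideanSpace ℝ ι →L[ℝ] ℝ) : ℝ :=
  ∑ i, ∑ j, A i j * L (EuclideanSpace.single j 1) * M (EuclideanSpace.single i 1)

theorem matrixPairing_sub_left (A : Matrix ι ι ℝ) (L L' M : EuclideanSpace ℝ ι →L[ℝ] ℝ) :
    matrixPairing A (L - L') M = matrixPairing A L M - matrixPairing A L' M := by
  simp only [matrixPairing, sub_apply, mul_sub, sub_mul, sum_sub_distrib]

theorem abs_matrixPairing_le {A : Matrix ι ι ℝ} {Λ : ℝ} (hA : ∀ i j, |A i j| ≤ Λ)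
    (L M : EuclideanSpace ℝ ι →L[ℝ] ℝ) :
    |matrixPairing A L M| ≤ Fintype.card ι * Λ * (‖L‖ * ‖M‖) := by
  rcases isEmpty_or_nonempty ι with _ | ⟨⟨i₀⟩⟩
  · simp [matrixPairing]
  have hΛ : 0 ≤ Λ := (abs_nonneg _).trans (hA i₀ i₀)
  set e : ι → EuclideanSpace ℝ ι := fun i => EuclideanSpace.single i 1
  calc |matrixPairing A L M|
      ≤ ∑ i, ∑ j, Λ * (|L (e j)| * |M (e i)|) := by
        refine (abs_sum_le_sum_abs _ _).trans (sum_le_sum fun i _ =>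
          (abs_sum_le_sum_abs _ _).trans (sum_le_sum fun j _ => ?_))
        rw [abs_mul, abs_mul, mul_assoc]
        gcongr
        exact hA i j
    _ = Λ * ((∑ j, |L (e j)|) * ∑ i, |M (e i)|) := by simp only [← mul_sum, ← sum_mul]
    _ ≤ Λ * ((√(Fintype.card ι) * ‖L‖) * (√(Fintype.card ι) * ‖M‖)) := by
        gcongr
        · exact L.sum_abs_apply_single_le
        · exact M.sum_abs_apply_single_le
    _ = Fintype.card ι * Λ * (‖L‖ * ‖M‖) := by
        rw [mul_mul_mul_comm, Real.mul_self_sqrt (Nat.cast_nonneg _)]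
        ring

end MatrixPairing

theorem IsOpen.exists_mem_of_ae_restrict {X : Type*} [TopologicalSpace X] [MeasurableSpace X]
    [OpensMeasurableSpace X] {μ : Measure X} [μ.IsOpenPosMeasure] {U : Set X} (hU : IsOpen U)
    (hne : U.Nonempty) {P : X → Prop} (h : ∀ᵐ x ∂μ.restrict U, P x) : ∃ x ∈ U, P x :=
  haveI := ae_restrict_neBot.2 (hU.measure_ne_zero μ hne)
  ((ae_restrict_mem hU.measurableSet).and h).exists

section TestFunction

variable {E : Type*} [NormedAddCommGroup E] [NormedSpace ℝ E] {k : WithTop ℕ∞}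

def IsTestFunction (k : WithTop ℕ∞) (Ω : Set E) (v : E → ℝ) : Prop :=
  ContDiff ℝ k v ∧ HasCompactSupport v ∧ tsupport v ⊆ Ω

theorem contDiff_div_of_ne_zero_on_tsupport {f g : E → ℝ} (hf : ContDiff ℝ k f)
    (hg : ContDiff ℝ k g) (h : ∀ x ∈ tsupport f, g x ≠ 0) : ContDiff ℝ k fun x => f x / g x := by
  refine contDiff_iff_contDiffAt.2 fun x => ?_
  by_cases hx : x ∈ tsupport f
  · exact hf.contDiffAt.div hg.contDiffAt (h x hx)
  · refine contDiffAt_const (c := (0 : ℝ)).congr_of_eventuallyEq ?_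
    filter_upwards [notMem_tsupport_iff_eventuallyEq.1 hx] with y hy
    simp [hy]

theorem IsTestFunction.div {Ω : Set E} {φ g : E → ℝ} (hφ : IsTestFunction k Ω φ)
    (hg : ContDiff ℝ k g) (hg₀ : ∀ x ∈ Ω, g x ≠ 0) : IsTestFunction k Ω fun x => φ x / g x := by
  obtain ⟨hφ, hφc, hφΩ⟩ := hφ
  have hsupp : Function.support (fun x => φ x / g x) ⊆ Function.support φ :=
    (Function.support_div _ _).trans_subset Set.inter_subset_left
  exact ⟨contDiff_div_of_ne_zero_on_tsupport hφ hg fun x hx => hg₀ x (hφΩ hx),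
    hφc.mono hsupp, (closure_mono hsupp).trans hφΩ⟩

end TestFunction

section FirstOrderLp

variable {X F : Type*} [NormedAddCommGroup X] [NormedSpace ℝ X] [MeasurableSpace X]
  [OpensMeasurableSpace X] [NormedAddCommGroup F] [NormedSpace ℝ F] {μ : Measure X}
  {f : X → F} {r : ENNReal}

theorem ContDiff.memLp_restrict_of_forall_norm_le [FiniteDimensional ℝ X] {s : Set X}
    [IsFiniteMeasure (μ.restrict s)] {C C' : ℝ} (hf : ContDiff ℝ 1 f) (hs : MeasurableSet s)
    (hfC : ∀ x ∈ s, ‖f x‖ ≤ C) (hDfC : ∀ x ∈ s, ‖fderiv ℝ f x‖ ≤ C') :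
    MemLp f r (μ.restrict s) ∧ MemLp (fderiv ℝ f) r (μ.restrict s) :=
  ⟨.of_bound hf.continuous.aestronglyMeasurable C (ae_restrict_of_forall_mem hs hfC),
    .of_bound (hf.continuous_fderiv one_ne_zero).aestronglyMeasurable C'
      (ae_restrict_of_forall_mem hs hDfC)⟩

theorem ContDiff.memLp_of_hasCompactSupport [IsFiniteMeasureOnCompacts μ] (hf : ContDiff ℝ 1 f)
    (hc : HasCompactSupport f) : MemLp f r μ ∧ MemLp (fderiv ℝ f) r μ :=
  ⟨hf.continuous.memLp_of_hasCompactSupport hc,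
    (hf.continuous_fderiv one_ne_zero).memLp_of_hasCompactSupport (hc.fderiv ℝ)⟩

end FirstOrderLp

theorem abs_mul_pow_sub_pow_mul_le {c a b d c₀ C : ℝ} (m : ℕ) (hc : |c| ≤ c₀) (ha : |a| ≤ C)
    (hb : |b| ≤ C) : |c * (a ^ m - b ^ m) * d| ≤ m * c₀ * C ^ (m - 1) * (|b - a| * |d|) := by
  have hc₀ : 0 ≤ c₀ := (abs_nonneg c).trans hc
  have hpow : |a ^ m - b ^ m| ≤ |b - a| * m * C ^ (m - 1) := by
    rw [abs_sub_comm b a]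
    exact (abs_pow_sub_pow_le ..).trans (by gcongr; exact max_le ha hb)
  calc |c * (a ^ m - b ^ m) * d| = |c| * |a ^ m - b ^ m| * |d| := by rw [abs_mul, abs_mul]
    _ ≤ c₀ * (|b - a| * m * C ^ (m - 1)) * |d| := by gcongr
    _ = m * c₀ * C ^ (m - 1) * (|b - a| * |d|) := by ring

theorem abs_sub_le_add_mul_add_mul_add {A B a b x₁ x₂ y₁ y₂ : ℝ} (hA : |A| ≤ b * (x₁ * y₁))
    (hB : |B| ≤ a * (x₂ * y₂)) (ha : 0 ≤ a) (hb : 0 ≤ b) (hx₁ : 0 ≤ x₁) (hx₂ : 0 ≤ x₂)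
    (hy₁ : 0 ≤ y₁) (hy₂ : 0 ≤ y₂) : |A - B| ≤ (a + b) * (x₁ + x₂) * (y₁ + y₂) := by
  refine (abs_sub _ _).trans ?_
  nlinarith [mul_nonneg (mul_nonneg ha hx₁) hy₁, mul_nonneg (mul_nonneg ha hx₁) hy₂,
    mul_nonneg (mul_nonneg ha hx₂) hy₁, mul_nonneg (mul_nonneg hb hx₁) hy₂,
    mul_nonneg (mul_nonneg hb hx₂) hy₁, mul_nonneg (mul_nonneg hb hx₂) hy₂]

section Integrals

variable {α : Type*} [MeasurableSpace α] {μ : Measure α} {E : Type*} [NormedAddCommGroup E]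
  {p q : ℝ} {w v : α → E}

theorem MeasureTheory.MemLp.integrable_norm_mul_norm (hpq : p.HolderConjugate q)
    (hw : MemLp w (.ofReal p) μ) (hv : MemLp v (.ofReal q) μ) :
    Integrable (fun x => ‖w x‖ * ‖v x‖) μ :=
  haveI := hpq.ennrealOfReal
  hw.norm.integrable_mul hv.norm

theorem MeasureTheory.Integrable.of_abs_le_mul_norm_mul_norm (hpq : p.HolderConjugate q)
    (hw : MemLp w (.ofReal p) μ) (hv : MemLp v (.ofReal q) μ) {g : α → ℝ} {K : ℝ}
    (hg : AEStronglyMeasurable g μ) (hgb : ∀ᵐ x ∂μ, |g x| ≤ K * (‖w x‖ * ‖v x‖)) :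
    Integrable g μ :=
  ((hw.integrable_norm_mul_norm hpq hv).const_mul K).mono' hg hgb

theorem abs_integral_le_of_abs_le_mul_norm_mul_norm (hpq : p.HolderConjugate q)
    (hw : MemLp w (.ofReal p) μ) (hv : MemLp v (.ofReal q) μ) {g : α → ℝ} {K : ℝ} (hK : 0 ≤ K)
    (hgb : ∀ᵐ x ∂μ, |g x| ≤ K * (‖w x‖ * ‖v x‖)) :
    |∫ x, g x ∂μ| ≤ K * ((∫ x, ‖w x‖ ^ p ∂μ) ^ (1 / p) * (∫ x, ‖v x‖ ^ q ∂μ) ^ (1 / q)) :=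
  calc |∫ x, g x ∂μ| ≤ ∫ x, K * (‖w x‖ * ‖v x‖) ∂μ :=
        norm_integral_le_of_norm_le (f := g) ((hw.integrable_norm_mul_norm hpq hv).const_mul K) hgb
    _ = K * ∫ x, ‖w x‖ * ‖v x‖ ∂μ := integral_const_mul K _
    _ ≤ K * ((∫ x, ‖w x‖ ^ p ∂μ) ^ (1 / p) * (∫ x, ‖v x‖ ^ q ∂μ) ^ (1 / q)) := by
        gcongr
        exact integral_mul_norm_le_Lp_mul_Lq hpq hw hv

theorem MeasureTheory.Integrable.mul_pow_mul {c a d : α → ℝ} {c₀ C : ℝ} (m : ℕ)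
    (hc : AEStronglyMeasurable c μ) (hcb : ∀ᵐ x ∂μ, |c x| ≤ c₀)
    (ha : AEStronglyMeasurable a μ) (hab : ∀ᵐ x ∂μ, |a x| ≤ C) (hd : Integrable d μ) :
    Integrable (fun x => c x * a x ^ m * d x) μ := by
  refine hd.bdd_mul (c := c₀ * C ^ m) (hc.mul (ha.pow m)) ?_
  filter_upwards [hcb, hab] with x hcx hax
  rw [norm_mul, norm_pow, Real.norm_eq_abs, Real.norm_eq_abs]
  exact mul_le_mul hcx (pow_le_pow_left₀ (abs_nonneg _) hax m) (by positivity)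
    ((abs_nonneg _).trans hcx)

theorem abs_integral_mul_pow_sub_pow_mul_le {c a b d : α → ℝ} {c₀ C : ℝ} (m : ℕ)
    (hpq : p.HolderConjugate q) (hc₀ : 0 ≤ c₀) (hC : 0 ≤ C) (hcb : ∀ᵐ x ∂μ, |c x| ≤ c₀)
    (hab : ∀ᵐ x ∂μ, |a x| ≤ C) (hbb : ∀ᵐ x ∂μ, |b x| ≤ C)
    (hw : MemLp (fun x => b x - a x) (.ofReal p) μ) (hd : MemLp d (.ofReal q) μ) :
    |∫ x, c x * (a x ^ m - b x ^ m) * d x ∂μ| ≤ m * c₀ * C ^ (m - 1) *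
      ((∫ x, |b x - a x| ^ p ∂μ) ^ (1 / p) * (∫ x, |d x| ^ q ∂μ) ^ (1 / q)) := by
  refine abs_integral_le_of_abs_le_mul_norm_mul_norm hpq hw hd (by positivity) ?_
  filter_upwards [hcb, hab, hbb] with x hcx hax hbx
  exact abs_mul_pow_sub_pow_mul_le m hcx hax hbx

variable {ι : Type*} [Fintype ι] [DecidableEq ι] {σ : α → Matrix ι ι ℝ}
  {Du Du' Dv : α → EuclideanSpace ℝ ι →L[ℝ] ℝ}

theorem MeasureTheory.Integrable.matrixPairing {Λ : ℝ}
    (hσ : ∀ i j, AEStronglyMeasurable (fun x => σ x i j) μ)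
    (hσb : ∀ᵐ x ∂μ, ∀ i j, |σ x i j| ≤ Λ) (hpq : p.HolderConjugate q)
    (hDu : MemLp Du (.ofReal p) μ) (hDv : MemLp Dv (.ofReal q) μ) :
    Integrable (fun x => matrixPairing (σ x) (Du x) (Dv x)) μ := by
  refine .of_abs_le_mul_norm_mul_norm hpq hDu hDv ?_
    (hσb.mono fun x hx => abs_matrixPairing_le hx _ _)
  exact Finset.aestronglyMeasurable_fun_sum _ fun i _ => Finset.aestronglyMeasurable_fun_sum _
    fun j _ => ((hσ i j).mul (hDu.1.apply_continuousLinearMap _)).mul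
      (hDv.1.apply_continuousLinearMap _)

theorem abs_integral_matrixPairing_le {Λ : ℝ} (hpq : p.HolderConjugate q) (hΛ : 0 ≤ Λ)
    (hσb : ∀ᵐ x ∂μ, ∀ i j, |σ x i j| ≤ Λ) (hDu : MemLp Du (.ofReal p) μ)
    (hDv : MemLp Dv (.ofReal q) μ) :
    |∫ x, matrixPairing (σ x) (Du x) (Dv x) ∂μ| ≤ Fintype.card ι * Λ *
      ((∫ x, ‖Du x‖ ^ p ∂μ) ^ (1 / p) * (∫ x, ‖Dv x‖ ^ q ∂μ) ^ (1 / q)) :=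
  abs_integral_le_of_abs_le_mul_norm_mul_norm hpq hDu hDv (by positivity)
    (hσb.mono fun x hx => abs_matrixPairing_le hx _ _)

theorem integral_mul_pow_mul_sub_eq_of_weak {q q' u u' v : α → ℝ} (m : ℕ)
    (hA : Integrable (fun x => matrixPairing (σ x) (Du x) (Dv x)) μ)
    (hA' : Integrable (fun x => matrixPairing (σ x) (Du' x) (Dv x)) μ)
    (hB : Integrable (fun x => q x * u x ^ m * v x) μ)
    (hB' : Integrable (fun x => q' x * u' x ^ m * v x) μ)
    (hC : Integrable (fun x => q x * u' x ^ m * v x) μ)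
    (hweak : (∫ x, matrixPairing (σ x) (Du x) (Dv x) ∂μ) + ∫ x, q x * u x ^ m * v x ∂μ =
      (∫ x, matrixPairing (σ x) (Du' x) (Dv x) ∂μ) + ∫ x, q' x * u' x ^ m * v x ∂μ) :
    ∫ x, (q x - q' x) * (u' x ^ m * v x) ∂μ =
      (∫ x, q x * (u' x ^ m - u x ^ m) * v x ∂μ) -
        ∫ x, matrixPairing (σ x) (Du x - Du' x) (Dv x) ∂μ := by
  have hlhs : ∫ x, (q x - q' x) * (u' x ^ m * v x) ∂μ =
      (∫ x, q x * u' x ^ m * v x ∂μ) - ∫ x, q' x * u' x ^ m * v x ∂μ := by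
    rw [← integral_sub hC hB']; congr 1; ext x; ring
  have hpot : ∫ x, q x * (u' x ^ m - u x ^ m) * v x ∂μ =
      (∫ x, q x * u' x ^ m * v x ∂μ) - ∫ x, q x * u x ^ m * v x ∂μ := by
    rw [← integral_sub hC hB]; congr 1; ext x; ring
  have hflux : ∫ x, matrixPairing (σ x) (Du x - Du' x) (Dv x) ∂μ =
      (∫ x, matrixPairing (σ x) (Du x) (Dv x) ∂μ) - ∫ x, matrixPairing (σ x) (Du' x) (Dv x) ∂μ := by
    rw [← integral_sub hA hA']; simp only [matrixPairing_sub_left]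
  linarith

end Integrals

theorem stmt_9_general (n : ℕ) (hn : 1 ≤ n) (Ω : Set (EuclideanSpace ℝ (Fin n)))
    (hΩo : IsOpen Ω) (hΩne : Ω.Nonempty) (hΩb : Bornology.IsBounded Ω)
    (m : ℕ)
    (σ : EuclideanSpace ℝ (Fin n) → Matrix (Fin n) (Fin n) ℝ)
    (hσmeas : ∀ i j, Measurable fun x => σ x i j)
    (Λ : ℝ) (hσbd : ∀ᵐ x ∂(volume.restrict Ω), ∀ i j, |σ x i j| ≤ Λ)
    (f : EuclideanSpace ℝ (Fin n) → ℝ)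
    (q qdag : EuclideanSpace ℝ (Fin n) → ℝ)
    (hqmeas : Measurable q) (hqdagmeas : Measurable qdag)
    (qbar : ℝ) (hq : ∀ᵐ x ∂(volume.restrict Ω), 0 ≤ q x ∧ q x ≤ qbar)
    (Mdag : ℝ) (hqdagbd : ∀ x ∈ Ω, |qdag x| ≤ Mdag)
    (p p' : ℝ) (hp : 2 ≤ p) (hp' : p' = p / (p - 1))
    (u udag : EuclideanSpace ℝ (Fin n) → ℝ)
    (hu : ContDiff ℝ 1 u) (hudag : ContDiff ℝ 1 udag)
    (CA : ℝ) (hub : ∀ x ∈ Ω, |u x| ≤ CA) (hudagb : ∀ x ∈ Ω, |udag x| ≤ CA)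
    (Mg : ℝ) (hgb : ∀ x ∈ Ω, ‖fderiv ℝ u x‖ ≤ Mg)
    (hgdagb : ∀ x ∈ Ω, ‖fderiv ℝ udag x‖ ≤ Mg)
    (hpos : ∀ x ∈ Ω, 0 < udag x)
    (hweak : ∀ v : EuclideanSpace ℝ (Fin n) → ℝ, ContDiff ℝ 1 v →
      HasCompactSupport v → tsupport v ⊆ Ω →
      (∫ x in Ω, ∑ i, ∑ j, σ x i j * fderiv ℝ u x (EuclideanSpace.single j 1) *
          fderiv ℝ v x (EuclideanSpace.single i 1)) +
        ∫ x in Ω, q x * u x ^ m * v x = ∫ x in Ω, f x * v x)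
    (hweakdag : ∀ v : EuclideanSpace ℝ (Fin n) → ℝ, ContDiff ℝ 1 v →
      HasCompactSupport v → tsupport v ⊆ Ω →
      (∫ x in Ω, ∑ i, ∑ j, σ x i j * fderiv ℝ udag x (EuclideanSpace.single j 1) *
          fderiv ℝ v x (EuclideanSpace.single i 1)) +
        ∫ x in Ω, qdag x * udag x ^ m * v x = ∫ x in Ω, f x * v x) :
    ∀ φ : EuclideanSpace ℝ (Fin n) → ℝ, ContDiff ℝ (⊤ : ℕ∞) φ →
      HasCompactSupport φ → tsupport φ ⊆ Ω →
      |∫ x in Ω, (q x - qdag x) * φ x| ≤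
        ((n : ℝ) * Λ + (m : ℝ) * qbar * CA ^ (m - 1)) *
          ((∫ x in Ω, |u x - udag x| ^ p) ^ (1 / p) +
            (∫ x in Ω, ‖fderiv ℝ u x - fderiv ℝ udag x‖ ^ p) ^ (1 / p)) *
          ((∫ x in Ω, |φ x / udag x ^ m| ^ p') ^ (1 / p') +
            (∫ x in Ω, ‖fderiv ℝ (fun y => φ y / udag y ^ m) x‖ ^ p') ^ (1 / p')) := by
  intro φ hφ hφc hφs
  have hΩm := hΩo.measurableSet
  have : IsFiniteMeasure (volume.restrict Ω) := isFiniteMeasure_restrict.2 hΩb.measure_lt_top.ne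
  obtain ⟨x₀, hx₀, hσx₀, hqx₀⟩ := hΩo.exists_mem_of_ae_restrict hΩne (hσbd.and hq)
  have hΛ : 0 ≤ Λ := (abs_nonneg _).trans (hσx₀ ⟨0, hn⟩ ⟨0, hn⟩)
  have hqbar : 0 ≤ qbar := hqx₀.1.trans hqx₀.2
  have hCA : 0 ≤ CA := (abs_nonneg _).trans (hub x₀ hx₀)
  have hpq : p.HolderConjugate p' := hp' ▸ .conjExponent (by linarith)
  have hqb : ∀ᵐ x ∂(volume.restrict Ω), |q x| ≤ qbar :=
    hq.mono fun x hx => abs_le.2 ⟨by linarith [hx.1], hx.2⟩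
  have hubΩ : ∀ᵐ x ∂(volume.restrict Ω), |u x| ≤ CA := ae_restrict_of_forall_mem hΩm hub
  have hudagbΩ : ∀ᵐ x ∂(volume.restrict Ω), |udag x| ≤ CA :=
    ae_restrict_of_forall_mem hΩm hudagb
  set v := fun y => φ y / udag y ^ m
  obtain ⟨hv, hvc, hvs⟩ : IsTestFunction 1 Ω v :=
    IsTestFunction.div ⟨hφ.of_le (by simp), hφc, hφs⟩ (hudag.pow m) fun x hx =>
      (pow_pos (hpos x hx) m).ne'
  have hvInt : Integrable v (volume.restrict Ω) :=
    (hv.continuous.integrable_of_hasCompactSupport hvc).integrableOn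
  obtain ⟨hvLp, hDv⟩ :=
    hv.memLp_of_hasCompactSupport hvc (μ := volume.restrict Ω) (r := .ofReal p')
  obtain ⟨huLp, hDu⟩ :=
    hu.memLp_restrict_of_forall_norm_le (μ := volume) (r := .ofReal p) hΩm hub hgb
  obtain ⟨hudagLp, hDudag⟩ :=
    hudag.memLp_restrict_of_forall_norm_le (μ := volume) (r := .ofReal p) hΩm hudagb hgdagb
  have hσ i j : AEStronglyMeasurable (fun x => σ x i j) (volume.restrict Ω) :=
    (hσmeas i j).aestronglyMeasurable
  have hkey := integral_mul_pow_mul_sub_eq_of_weak m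
    (.matrixPairing hσ hσbd hpq hDu hDv) (.matrixPairing hσ hσbd hpq hDudag hDv)
    (.mul_pow_mul m hqmeas.aestronglyMeasurable hqb hu.continuous.aestronglyMeasurable hubΩ hvInt)
    (.mul_pow_mul m hqdagmeas.aestronglyMeasurable (ae_restrict_of_forall_mem hΩm hqdagbd)
      hudag.continuous.aestronglyMeasurable hudagbΩ hvInt)
    (.mul_pow_mul m hqmeas.aestronglyMeasurable hqb hudag.continuous.aestronglyMeasurable
      hudagbΩ hvInt)
    ((hweak v hv hvc hvs).trans (hweakdag v hv hvc hvs).symm)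
  have hφv : ∀ x ∈ Ω, (q x - qdag x) * φ x = (q x - qdag x) * (udag x ^ m * v x) :=
    fun x hx => by rw [mul_div_cancel₀ _ (pow_pos (hpos x hx) m).ne']
  rw [setIntegral_congr_fun hΩm hφv, hkey]
  refine abs_sub_le_add_mul_add_mul_add
    (abs_integral_mul_pow_sub_pow_mul_le m hpq hqbar hCA hqb hudagbΩ hubΩ (huLp.sub hudagLp) hvLp)
    (by simpa using abs_integral_matrixPairing_le hpq hΛ hσbd (hDu.sub hDudag) hDv)
    ?_ ?_ ?_ ?_ ?_ ?_
  all_goals positivity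

/-- Key inequality of the conditional stability theorem: testing the subtracted
weak formulations with `v = (u†)^{-m} φ` bounds `|∫ (q - q†) φ|` by the
`W^{1,p}` distance of the states times the weighted `W^{1,p'}` norm of `φ`. -/
theorem stmt_9 (n : ℕ) (hn : 1 ≤ n) (Ω : Set (EuclideanSpace ℝ (Fin n)))
    (hΩo : IsOpen Ω) (hΩne : Ω.Nonempty) (hΩb : Bornology.IsBounded Ω)
    (m l : ℕ) (hm : m = 2 * l + 1)
    (σ : EuclideanSpace ℝ (Fin n) → Matrix (Fin n) (Fin n) ℝ)
    (hσmeas : ∀ i j, Measurable fun x => σ x i j)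
    (Λ : ℝ) (hσbd : ∀ᵐ x ∂(volume.restrict Ω), ∀ i j, |σ x i j| ≤ Λ)
    (f : EuclideanSpace ℝ (Fin n) → ℝ) (hf : IntegrableOn f Ω)
    (q qdag : EuclideanSpace ℝ (Fin n) → ℝ)
    (hqmeas : Measurable q) (hqdagmeas : Measurable qdag)
    (qbar : ℝ) (hq : ∀ᵐ x ∂(volume.restrict Ω), 0 ≤ q x ∧ q x ≤ qbar)
    (Mdag : ℝ) (hqdagbd : ∀ x ∈ Ω, |qdag x| ≤ Mdag)
    (p p' : ℝ) (hp : 2 ≤ p) (hp' : p' = p / (p - 1))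
    (u udag : EuclideanSpace ℝ (Fin n) → ℝ)
    (hu : ContDiff ℝ 1 u) (hudag : ContDiff ℝ 1 udag)
    (CA : ℝ) (hub : ∀ x ∈ Ω, |u x| ≤ CA) (hudagb : ∀ x ∈ Ω, |udag x| ≤ CA)
    (Mg : ℝ) (hgb : ∀ x ∈ Ω, ‖fderiv ℝ u x‖ ≤ Mg)
    (hgdagb : ∀ x ∈ Ω, ‖fderiv ℝ udag x‖ ≤ Mg)
    (hpos : ∀ x ∈ Ω, 0 < udag x)
    (hweak : ∀ v : EuclideanSpace ℝ (Fin n) → ℝ, ContDiff ℝ 1 v →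
      HasCompactSupport v → tsupport v ⊆ Ω →
      (∫ x in Ω, ∑ i, ∑ j, σ x i j * fderiv ℝ u x (EuclideanSpace.single j 1) *
          fderiv ℝ v x (EuclideanSpace.single i 1)) +
        ∫ x in Ω, q x * u x ^ m * v x = ∫ x in Ω, f x * v x)
    (hweakdag : ∀ v : EuclideanSpace ℝ (Fin n) → ℝ, ContDiff ℝ 1 v →
      HasCompactSupport v → tsupport v ⊆ Ω →
      (∫ x in Ω, ∑ i, ∑ j, σ x i j * fderiv ℝ udag x (EuclideanSpace.single j 1) *
          fderiv ℝ v x (EuclideanSpace.single i 1)) +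
        ∫ x in Ω, qdag x * udag x ^ m * v x = ∫ x in Ω, f x * v x) :
    ∀ φ : EuclideanSpace ℝ (Fin n) → ℝ, ContDiff ℝ (⊤ : ℕ∞) φ →
      HasCompactSupport φ → tsupport φ ⊆ Ω →
      |∫ x in Ω, (q x - qdag x) * φ x| ≤
        ((n : ℝ) * Λ + (m : ℝ) * qbar * CA ^ (m - 1)) *
          ((∫ x in Ω, |u x - udag x| ^ p) ^ (1 / p) +
            (∫ x in Ω, ‖fderiv ℝ u x - fderiv ℝ udag x‖ ^ p) ^ (1 / p)) *
          ((∫ x in Ω, |φ x / udag x ^ m| ^ p') ^ (1 / p') +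
            (∫ x in Ω, ‖fderiv ℝ (fun y => φ y / udag y ^ m) x‖ ^ p') ^ (1 / p')) :=
  stmt_9_general n hn Ω hΩo hΩne hΩb m σ hσmeas Λ hσbd f q qdag hqmeas hqdagmeas qbar hq Mdag
    hqdagbd p p' hp hp' u udag hu hudag CA hub hudagb Mg hgb hgdagb hpos hweak hweakdag
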